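/- arXiv:2601.10334 — 2 statements merged into one kernel-verified Lean document; each statement's English description precedes it below -/
import Mathlib

section
/- Reconstruction equivariance of the augmented MMSE: let A : ℝ^N → ℝ^M be linear and commute with a family of orthogonal maps (T_g)_{g∈G} (acting on both ℝ^N and ℝ^M consistently so that A T_g = T_g A), and suppose the dataset S = T(D) is invariant under all T_g. Define f(y) = (∑_{z∈S} z·exp(−‖y − Az‖²/(2σ²))) / (∑_{z∈S} exp(−‖y − Az‖²/(2σ²))). Then f(A T_g x̄ + e) = T_g f(A x̄ + T_g⁻¹ e) for all x̄ ∈ ℝ^N, e ∈ ℝ^M, g ∈ G. -/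
/-- reconstruction equivariance of the data-augmented MMSE estimator. -/
theorem augmented_mmse_reconstruction_equivariance {G : Type*} [Group G] {N M : ℕ}
    (TN : G → (EuclideanSpace ℝ (Fin N) ≃ₗᵢ[ℝ] EuclideanSpace ℝ (Fin N)))
    (TM : G → (EuclideanSpace ℝ (Fin M) ≃ₗᵢ[ℝ] EuclideanSpace ℝ (Fin M)))
    (A : EuclideanSpace ℝ (Fin N) →ₗ[ℝ] EuclideanSpace ℝ (Fin M))
    (hcomm : ∀ (g : G) v, A (TN g v) = TM g (A v))
    (S : Finset (EuclideanSpace ℝ (Fin N))) (hS : S.Nonempty)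
    (hSinv : ∀ (g : G) z, z ∈ S ↔ TN g z ∈ S)
    (σ : ℝ) (hσ : 0 < σ)
    (f : EuclideanSpace ℝ (Fin M) → EuclideanSpace ℝ (Fin N))
    (hf : f = fun y =>
      (∑ z ∈ S, Real.exp (-‖y - A z‖ ^ 2 / (2 * σ ^ 2)))⁻¹ •
        ∑ z ∈ S, Real.exp (-‖y - A z‖ ^ 2 / (2 * σ ^ 2)) • z)
    (g : G) (xbar : EuclideanSpace ℝ (Fin N)) (e : EuclideanSpace ℝ (Fin M)) :
    f (A (TN g xbar) + e) = TN g (f (A xbar + (TM g).symm e)) := by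
  subst hf
  set y1 := A (TN g xbar) + e with hy1
  set y2 := A xbar + (TM g).symm e with hy2
  have key : ∀ z : EuclideanSpace ℝ (Fin N), ‖y1 - A z‖ = ‖y2 - A ((TN g).symm z)‖ := by
    intro z
    have h1 : y1 - A z = TM g (y2 - A ((TN g).symm z)) := by
      rw [map_sub, map_add, ← hcomm, ← hcomm]
      simp [hy1, hy2]
    rw [h1, LinearIsometryEquiv.norm_map]
  have hbij : ∀ {β : Type} [AddCommMonoid β] (F : EuclideanSpace ℝ (Fin N) → β),
      ∑ z ∈ S, F z = ∑ z ∈ S, F (TN g z) := by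
    intro β _ F
    refine Finset.sum_bij' (fun z _ => (TN g).symm z) (fun z _ => TN g z) ?_ ?_ ?_ ?_ ?_
    · intro z hz
      exact (hSinv g ((TN g).symm z)).mpr (by simpa using hz)
    · intro z hz; exact (hSinv g z).mp hz
    · intro z _; simp
    · intro z _; simp
    · intro z _; simp
  have hw : ∀ z : EuclideanSpace ℝ (Fin N),
      Real.exp (-‖y1 - A (TN g z)‖ ^ 2 / (2 * σ ^ 2))
        = Real.exp (-‖y2 - A z‖ ^ 2 / (2 * σ ^ 2)) := by
    intro z
    rw [key (TN g z)]
    simp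
  have hden : ∑ z ∈ S, Real.exp (-‖y1 - A z‖ ^ 2 / (2 * σ ^ 2))
      = ∑ z ∈ S, Real.exp (-‖y2 - A z‖ ^ 2 / (2 * σ ^ 2)) := by
    rw [hbij (fun z => Real.exp (-‖y1 - A z‖ ^ 2 / (2 * σ ^ 2)))]
    exact Finset.sum_congr rfl fun z _ => hw z
  have hnum : ∑ z ∈ S, Real.exp (-‖y1 - A z‖ ^ 2 / (2 * σ ^ 2)) • z
      = TN g (∑ z ∈ S, Real.exp (-‖y2 - A z‖ ^ 2 / (2 * σ ^ 2)) • z) := by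
    rw [hbij (fun z => Real.exp (-‖y1 - A z‖ ^ 2 / (2 * σ ^ 2)) • z), map_sum]
    refine Finset.sum_congr rfl fun z _ => ?_
    rw [hw z, LinearIsometryEquiv.map_smul]
  simp only [hden, hnum, LinearIsometryEquiv.map_smul]
end

section
/- If f : ℝ^p → ℝ is real-analytic and not identically zero, then its zero set {v : f(v) = 0} has Lebesgue measure zero. -/
open MeasureTheory Set Filter Topology

/-- 1-D case: the zero set of a not-identically-zero analytic function on `ℝ` is countable. -/
lemma analytic_zero_set_countable_1d (f : ℝ → ℝ) (hf : AnalyticOnNhd ℝ f Set.univ)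
    (hne : ∃ v, f v ≠ 0) : {x : ℝ | f x = 0}.Countable := by
  set Z := {x : ℝ | f x = 0} with hZdef
  have hdisj : ∀ x : ℝ, Disjoint (𝓝[≠] x) (𝓟 Z) := by
    intro x
    rcases (hf x trivial).eventually_eq_zero_or_eventually_ne_zero with h | h
    · exfalso
      obtain ⟨v, hv⟩ := hne
      have heq : f =ᶠ[𝓝 x] 0 := h.mono fun y hy => by simpa using hy
      have := hf.eqOn_zero_of_preconnected_of_eventuallyEq_zero isPreconnected_univ
        (Set.mem_univ x) heq
      exact hv (this (Set.mem_univ v))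
    · rw [disjoint_principal_right]
      filter_upwards [h] with y hy
      simpa [Z] using hy
  have hcd := isClosed_and_discrete_iff.mpr hdisj
  have hfin : ∀ n : ℕ, (Z ∩ Metric.closedBall (0 : ℝ) n).Finite := by
    intro n
    have hdt : IsDiscrete (Z ∩ Metric.closedBall (0 : ℝ) n : Set ℝ) :=
      hcd.2.mono Set.inter_subset_left
    exact ((isCompact_closedBall (0 : ℝ) n).inter_left hcd.1).finite hdt
  have hcover : Z = ⋃ n : ℕ, Z ∩ Metric.closedBall (0 : ℝ) n := by
    ext x
    simp only [Set.mem_iUnion, Set.mem_inter_iff, Metric.mem_closedBall, Real.dist_eq, sub_zero]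
    constructor
    · intro hx
      obtain ⟨n, hn⟩ := exists_nat_ge |x|
      exact ⟨n, hx, hn⟩
    · rintro ⟨n, hn, -⟩
      exact hn
  rw [hcover]
  exact Set.countable_iUnion fun n => (hfin n).countable

/-- Main induction on the dimension, for `Fin p → ℝ` with the pi (Lebesgue) measure. -/
lemma analytic_zero_set_measure_zero_pi :
    ∀ (p : ℕ) (f : (Fin p → ℝ) → ℝ), AnalyticOnNhd ℝ f Set.univ →
      (∃ v, f v ≠ 0) → volume {v | f v = 0} = 0 := by
  intro p
  induction p with
  | zero =>
    rintro f hf ⟨v, hv⟩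
    have hempty : {w : Fin 0 → ℝ | f w = 0} = ∅ := by
      ext w
      simp [Subsingleton.elim w v, hv]
    simp [hempty]
  | succ n ih =>
    rintro f hf ⟨v, hv⟩
    set Z := {w : Fin (n + 1) → ℝ | f w = 0} with hZdef
    have hcont : Continuous f := by
      rw [← continuousOn_univ]
      exact hf.continuousOn
    have hZm : MeasurableSet Z := (isClosed_eq hcont continuous_const).measurableSet
    set e := MeasurableEquiv.piFinSuccAbove (fun _ : Fin (n + 1) => ℝ) 0 with hedef
    have hmp : MeasurePreserving e :=
      volume_preserving_piFinSuccAbove (fun _ : Fin (n + 1) => ℝ) 0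
    -- the inverse of `e` as a continuous linear map
    let L : (ℝ × (Fin n → ℝ)) →L[ℝ] (Fin (n + 1) → ℝ) :=
      ContinuousLinearMap.pi (fun k =>
        Fin.cases (ContinuousLinearMap.fst ℝ ℝ (Fin n → ℝ))
          (fun j => (ContinuousLinearMap.proj j).comp (ContinuousLinearMap.snd ℝ ℝ (Fin n → ℝ)))
          k)
    have hLe : ∀ y : ℝ × (Fin n → ℝ), L y = e.symm y := by
      intro y
      funext k
      have hsy : e.symm y = Fin.insertNth 0 y.1 y.2 := rfl
      rw [hsy]
      refine Fin.cases ?_ ?_ k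
      · simp [L, Fin.insertNth_apply_same]
      · intro j
        have h1 : L y j.succ = y.2 j := by simp [L]
        have h2 : Fin.insertNth (α := fun _ : Fin (n + 1) => ℝ) 0 y.1 y.2 j.succ = y.2 j := by
          have h3 := Fin.insertNth_apply_succAbove (α := fun _ : Fin (n + 1) => ℝ) 0 y.1 y.2 j
          rwa [Fin.succAbove_zero] at h3
        rw [h1, h2]
    set g : (ℝ × (Fin n → ℝ)) → ℝ := fun y => f (L y) with hgdef
    have hg : AnalyticOnNhd ℝ g Set.univ := fun y _ =>
      (hf (L y) trivial).comp (L.analyticAt y)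
    have hgcont : Continuous g := hcont.comp L.continuous
    set S := {y : ℝ × (Fin n → ℝ) | g y = 0} with hSdef
    have hSm : MeasurableSet S := (isClosed_eq hgcont continuous_const).measurableSet
    have hpre : e.symm ⁻¹' Z = S := by
      ext y
      simp only [Set.mem_preimage, Set.mem_setOf_eq, hZdef, hSdef, hgdef, hLe]
    have hvol : volume S = volume Z := by
      rw [← hpre]
      exact (MeasurePreserving.symm e hmp).measure_preimage hZm.nullMeasurableSet
    rw [← hvol]
    -- non-vanishing point of `g`
    obtain ⟨t₀, x₀⟩ := e v
    have hgv : g (e v) ≠ 0 := by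
      have : L (e v) = v := by rw [hLe]; exact e.symm_apply_apply v
      simpa [hgdef, this] using hv
    rw [show (volume : Measure (ℝ × (Fin n → ℝ))) = (volume : Measure ℝ).prod volume from rfl,
      MeasureTheory.Measure.measure_prod_null hSm]
    -- bad set of first coordinates
    have h1d : volume {t : ℝ | g (t, (e v).2) = 0} = 0 := by
      have hanal : AnalyticOnNhd ℝ (fun t : ℝ => g (t, (e v).2)) Set.univ := by
        intro t _
        have hh : AnalyticAt ℝ (fun s : ℝ => (s, (e v).2)) t :=
          (analyticAt_id).prod analyticAt_const
        exact AnalyticAt.comp (f := fun s : ℝ => (s, (e v).2)) (hg _ trivial) hh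
      have hnz : ∃ t : ℝ, g (t, (e v).2) ≠ 0 := ⟨(e v).1, by simpa using hgv⟩
      exact (analytic_zero_set_countable_1d _ hanal hnz).measure_zero volume
    have hae : ∀ᵐ t : ℝ, g (t, (e v).2) ≠ 0 := by
      rw [ae_iff]
      simpa using h1d
    filter_upwards [hae] with t ht
    have hsl : volume {x : Fin n → ℝ | g (t, x) = 0} = 0 := by
      refine ih (fun x => g (t, x)) ?_ ⟨(e v).2, ht⟩
      intro x _
      have hh : AnalyticAt ℝ (fun z : Fin n → ℝ => (t, z)) x :=
        (analyticAt_const).prod analyticAt_id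
      exact AnalyticAt.comp (f := fun z : Fin n → ℝ => (t, z)) (hg _ trivial) hh
    have : Prod.mk t ⁻¹' S = {x : Fin n → ℝ | g (t, x) = 0} := rfl
    simpa [this] using hsl

/-- the zero set of a real-analytic function on ℝ^p that is not
identically zero has Lebesgue measure zero. -/
theorem analytic_zero_set_measure_zero {p : ℕ} (hp : 1 ≤ p)
    (f : EuclideanSpace ℝ (Fin p) → ℝ)
    (hf : AnalyticOnNhd ℝ f Set.univ)
    (hne : ∃ v, f v ≠ 0) :
    volume {v : EuclideanSpace ℝ (Fin p) | f v = 0} = 0 := by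
  set E := (MeasurableEquiv.toLp 2 (Fin p → ℝ)).symm with hEdef
  have hE : MeasurePreserving E := EuclideanSpace.volume_preserving_symm_measurableEquiv_toLp (Fin p)
  have hcont : Continuous f := by
    rw [← continuousOn_univ]
    exact hf.continuousOn
  have hZm : MeasurableSet {v : EuclideanSpace ℝ (Fin p) | f v = 0} :=
    (isClosed_eq hcont continuous_const).measurableSet
  set f' : (Fin p → ℝ) → ℝ := fun x => f (E.symm x) with hf'def
  have hsymm : ∀ x : Fin p → ℝ,
      E.symm x = ((EuclideanSpace.equiv (Fin p) ℝ).symm : (Fin p → ℝ) →L[ℝ] _) x := fun _ => rfl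
  have hf' : AnalyticOnNhd ℝ f' Set.univ := by
    intro x _
    exact (hf (E.symm x) trivial).comp
      (((EuclideanSpace.equiv (Fin p) ℝ).symm.toContinuousLinearMap).analyticAt x)
  have hne' : ∃ x, f' x ≠ 0 := by
    obtain ⟨v, hv⟩ := hne
    exact ⟨E v, by simpa [hf'def] using hv⟩
  have key := analytic_zero_set_measure_zero_pi p f' hf' hne'
  have hpre : E.symm ⁻¹' {v : EuclideanSpace ℝ (Fin p) | f v = 0} = {x | f' x = 0} := rfl
  calc volume {v : EuclideanSpace ℝ (Fin p) | f v = 0}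
      = volume (E.symm ⁻¹' {v : EuclideanSpace ℝ (Fin p) | f v = 0}) :=
        ((MeasurePreserving.symm E hE).measure_preimage hZm.nullMeasurableSet).symm
    _ = 0 := by rw [hpre]; exact key
end
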